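/- arXiv:1405.2779 — 2 statements merged into one kernel-verified Lean document; each statement's English description precedes it below -/
import Mathlib

section
/- For any two convex compact sets K, L in ℝ^d containing the origin with polars K*, L*, one has ρ_H(K*, L*) ≤ max(‖K*‖, ‖L*‖)^2 · ρ_H(K, L), where ‖A‖ = sup{‖x‖ : x ∈ A}. -/
/-! If `⟪u, ·⟫ ≤ 1` on `L` and every point of `K` lies within `ε` of `L`, then `⟪u, ·⟫ ≤ 1 + ‖u‖ ε`
on `K`, so the rescaled functional `u / (1 + ‖u‖ ε)` lies in `K*`. It differs from `u` by
`‖u‖² ε / (1 + ‖u‖ ε) ≤ ‖u‖² ε`, and `‖u‖ ≤ max (‖K*‖, ‖L*‖)` for `u ∈ L*`. -/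

open Pointwise Metric
open scoped RealInnerProductSpace ENNReal

noncomputable section

/-- The polar of a set `K` in Euclidean space. -/
def polarSet {d : ℕ} (K : Set (EuclideanSpace ℝ (Fin d))) : Set (EuclideanSpace ℝ (Fin d)) :=
  {u | ∀ x ∈ K, ⟪u, x⟫ ≤ (1 : ℝ)}

/-- The (possibly infinite) norm of a set: `sup {‖x‖ : x ∈ A}`. -/
def setNormE {d : ℕ} (A : Set (EuclideanSpace ℝ (Fin d))) : ℝ≥0∞ :=
  ⨆ x ∈ A, (‖x‖₊ : ℝ≥0∞)

section InnerProductSpace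

variable {E : Type*} [NormedAddCommGroup E] [InnerProductSpace ℝ E]

theorem inner_le_one_add_mul_infDist {L : Set E} (hL : L.Nonempty) {u : E}
    (hu : ∀ y ∈ L, ⟪u, y⟫ ≤ 1) (x : E) : ⟪u, x⟫ ≤ 1 + ‖u‖ * infDist x L := by
  have : Nonempty L := hL.to_subtype
  suffices ⟪u, x⟫ - 1 ≤ ‖u‖ * infDist x L by linarith
  rw [infDist_eq_iInf, Real.mul_iInf_of_nonneg (norm_nonneg u)]
  refine le_ciInf fun ⟨y, hy⟩ => ?_
  calc ⟪u, x⟫ - 1 ≤ ⟪u, x⟫ - ⟪u, y⟫ := by linarith [hu y hy]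
    _ = ⟪u, x - y⟫ := (inner_sub_right u x y).symm
    _ ≤ ‖u‖ * ‖x - y‖ := real_inner_le_norm u (x - y)
    _ = ‖u‖ * dist x y := by rw [dist_eq_norm]

theorem inner_le_one_add_mul_hausdorffDist {K L : Set E} (hfin : hausdorffEDist K L ≠ ⊤) {u : E}
    (hu : ∀ y ∈ L, ⟪u, y⟫ ≤ 1) {x : E} (hx : x ∈ K) :
    ⟪u, x⟫ ≤ 1 + ‖u‖ * hausdorffDist K L :=
  calc ⟪u, x⟫ ≤ 1 + ‖u‖ * infDist x L :=
        inner_le_one_add_mul_infDist (nonempty_of_hausdorffEDist_ne_top ⟨x, hx⟩ hfin) hu x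
    _ ≤ 1 + ‖u‖ * hausdorffDist K L := by
        gcongr; exact infDist_le_hausdorffDist_of_mem hx hfin

theorem norm_sub_inv_one_add_smul_le {e : ℝ} (he : 0 ≤ e) (u : E) :
    ‖u - (1 + ‖u‖ * e)⁻¹ • u‖ ≤ ‖u‖ ^ 2 * e := by
  have hc : 1 ≤ 1 + ‖u‖ * e := le_add_of_nonneg_right (by positivity)
  have hcoef : 1 - (1 + ‖u‖ * e)⁻¹ = ‖u‖ * e / (1 + ‖u‖ * e) := by
    field_simp; ring
  calc ‖u - (1 + ‖u‖ * e)⁻¹ • u‖ = ‖(1 - (1 + ‖u‖ * e)⁻¹) • u‖ := by rw [sub_smul, one_smul]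
    _ = ‖u‖ * e / (1 + ‖u‖ * e) * ‖u‖ := by
        rw [hcoef, norm_smul, Real.norm_of_nonneg (by positivity)]
    _ ≤ ‖u‖ * e * ‖u‖ := by gcongr; exact div_le_self (by positivity) hc
    _ = ‖u‖ ^ 2 * e := by ring

end InnerProductSpace

section Polar

variable {d : ℕ}

theorem zero_mem_polarSet (K : Set (EuclideanSpace ℝ (Fin d))) : 0 ∈ polarSet K := by
  intro x _
  simp

theorem nnnorm_le_setNormE {A : Set (EuclideanSpace ℝ (Fin d))} {u : EuclideanSpace ℝ (Fin d)}
    (hu : u ∈ A) : (‖u‖₊ : ℝ≥0∞) ≤ setNormE A :=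
  le_iSup₂ (f := fun x (_ : x ∈ A) => (‖x‖₊ : ℝ≥0∞)) u hu

theorem inv_one_add_smul_mem_polarSet {K L : Set (EuclideanSpace ℝ (Fin d))}
    (hfin : hausdorffEDist K L ≠ ⊤) {u : EuclideanSpace ℝ (Fin d)} (hu : u ∈ polarSet L) :
    (1 + ‖u‖ * hausdorffDist K L)⁻¹ • u ∈ polarSet K := by
  intro x hx
  have hc : 0 < 1 + ‖u‖ * hausdorffDist K L :=
    add_pos_of_pos_of_nonneg one_pos (mul_nonneg (norm_nonneg u) hausdorffDist_nonneg)
  rw [real_inner_smul_left, inv_mul_le_one₀ hc]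
  exact inner_le_one_add_mul_hausdorffDist hfin hu hx

theorem infEDist_polarSet_le {K L : Set (EuclideanSpace ℝ (Fin d))}
    {u : EuclideanSpace ℝ (Fin d)} (hu : u ∈ polarSet L) :
    infEDist u (polarSet K) ≤ ‖u‖₊ ^ 2 * hausdorffEDist K L := by
  by_cases hu0 : u = 0
  · rw [hu0, infEDist_zero_of_mem (zero_mem_polarSet K)]
    exact zero_le
  by_cases hfin : hausdorffEDist K L = ⊤
  · rw [hfin, ENNReal.mul_top (by simpa using hu0)]
    exact le_top
  have he : ENNReal.ofReal (hausdorffDist K L) = hausdorffEDist K L := ENNReal.ofReal_toReal hfin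
  calc infEDist u (polarSet K)
      ≤ edist u ((1 + ‖u‖ * hausdorffDist K L)⁻¹ • u) :=
        infEDist_le_edist_of_mem (inv_one_add_smul_mem_polarSet hfin hu)
    _ ≤ ENNReal.ofReal (‖u‖ ^ 2 * hausdorffDist K L) := by
        rw [edist_dist, dist_eq_norm]
        exact ENNReal.ofReal_le_ofReal (norm_sub_inv_one_add_smul_le hausdorffDist_nonneg u)
    _ = ‖u‖₊ ^ 2 * hausdorffEDist K L := by
        rw [ENNReal.ofReal_mul (by positivity), ENNReal.ofReal_pow (norm_nonneg u), ofReal_norm, he]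
        rfl

end Polar

theorem hausdorffEdist_polar_le_norm_sq_general {d : ℕ}
    (K L : Set (EuclideanSpace ℝ (Fin d))) :
    EMetric.hausdorffEdist (polarSet K) (polarSet L)
      ≤ (max (setNormE (polarSet K)) (setNormE (polarSet L))) ^ 2
          * EMetric.hausdorffEdist K L := by
  show hausdorffEDist (polarSet K) (polarSet L) ≤ _ * hausdorffEDist K L
  refine hausdorffEDist_le_of_infEDist (fun u hu => ?_) (fun u hu => ?_)
  · calc infEDist u (polarSet L) ≤ ‖u‖₊ ^ 2 * hausdorffEDist L K := infEDist_polarSet_le hu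
      _ ≤ _ := by
          rw [hausdorffEDist_comm]
          gcongr
          exact le_max_of_le_left (nnnorm_le_setNormE hu)
  · calc infEDist u (polarSet K) ≤ ‖u‖₊ ^ 2 * hausdorffEDist K L := infEDist_polarSet_le hu
      _ ≤ _ := by
          gcongr
          exact le_max_of_le_right (nnnorm_le_setNormE hu)

/-- For any two convex compact sets `K, L` containing the origin,
`ρ_H(K*, L*) ≤ max(‖K*‖, ‖L*‖)² ρ_H(K, L)`. -/
theorem hausdorffEdist_polar_le_norm_sq {d : ℕ}
    (K L : Set (EuclideanSpace ℝ (Fin d)))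
    (hKconv : Convex ℝ K) (hKcomp : IsCompact K) (hK0 : (0 : EuclideanSpace ℝ (Fin d)) ∈ K)
    (hLconv : Convex ℝ L) (hLcomp : IsCompact L) (hL0 : (0 : EuclideanSpace ℝ (Fin d)) ∈ L) :
    EMetric.hausdorffEdist (polarSet K) (polarSet L)
      ≤ (max (setNormE (polarSet K)) (setNormE (polarSet L))) ^ 2
          * EMetric.hausdorffEdist K L :=
  hausdorffEdist_polar_le_norm_sq_general K L
end
end

section
/- In a partially ordered abelian semigroup with order-reversing involution as above, inserting e* truncates the continued fraction: [x_1,…,x_m, e*, x_{m+1},…,x_n] = [x_1,…,x_m]; and inserting e merges adjacent terms: [x_1,…,x_m, e, x_{m+1},…,x_n] = [x_1,…,x_m + x_{m+1},…,x_n] for 0 < m < n. -/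
/-!
A tail starting with `e* = s 0` evaluates to `s (e* + …) = s e* = e`, which is neutral for the
entry before it. A tail `[e, y, …]` evaluates to `s [y, …]`, and the involution cancels the outer
`s` of `[y, …]`, so `y` is absorbed into the preceding entry.
-/

/-- The continued fraction `[x₁,…,xₙ]` on a semigroup with involution `s`:
`[x] = s x` and `[x₁,…,x_{n+1}] = s (x₁ + [x₂,…,x_{n+1}])`. -/
def cf {K : Type*} [AddCommMonoid K] (s : K → K) : List K → K
  | [] => s 0
  | [x] => s x
  | x :: y :: l => s (x + cf s (y :: l))

section ContinuedFraction

variable {K : Type*} [AddCommMonoid K] {s : K → K}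

theorem cf_cons_of_ne_nil (a : K) {l : List K} (hl : l ≠ []) :
    cf s (a :: l) = s (a + cf s l) := by
  cases l with
  | nil => exact absurd rfl hl
  | cons b t => rfl

theorem cf_append_congr (l₁ : List K) {l l' : List K} (hl : l ≠ []) (hl' : l' ≠ [])
    (h : cf s l = cf s l') : cf s (l₁ ++ l) = cf s (l₁ ++ l') := by
  induction l₁ with
  | nil => exact h
  | cons a t ih =>
    rw [List.cons_append, List.cons_append, cf_cons_of_ne_nil a (by simp [hl]),
      cf_cons_of_ne_nil a (by simp [hl']), ih]

theorem cf_cons_zero_cons (hs : Function.Involutive s) (x y : K) (l : List K) :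
    cf s (x :: 0 :: y :: l) = cf s ((x + y) :: l) := by
  have hzero : cf s ((0 : K) :: y :: l) = s (cf s (y :: l)) := by
    rw [cf_cons_of_ne_nil 0 (List.cons_ne_nil y l), zero_add]
  rw [cf_cons_of_ne_nil x (List.cons_ne_nil _ _), hzero]
  cases l with
  | nil => exact congrArg (fun z => s (x + z)) (hs y)
  | cons z t =>
    rw [cf_cons_of_ne_nil y (List.cons_ne_nil z t), hs, ← add_assoc,
      cf_cons_of_ne_nil (x + y) (List.cons_ne_nil z t)]

variable (hs : Function.Involutive s) (habs : ∀ a : K, s 0 + a = s 0)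
include hs habs

theorem cf_cons_sZero (l : List K) : cf s (s 0 :: l) = 0 := by
  cases l with
  | nil => exact hs 0
  | cons y t => rw [cf_cons_of_ne_nil _ (List.cons_ne_nil y t), habs, hs]

theorem cf_cons_append_sZero (a : K) (l₁ l₂ : List K) :
    cf s (a :: l₁ ++ s 0 :: l₂) = cf s (a :: l₁) := by
  induction l₁ generalizing a with
  | nil =>
    rw [List.singleton_append, cf_cons_of_ne_nil a (List.cons_ne_nil _ _),
      cf_cons_sZero hs habs, add_zero]
    rfl
  | cons b u ih =>
    rw [List.cons_append, cf_cons_of_ne_nil a (by simp), ih b,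
      cf_cons_of_ne_nil a (List.cons_ne_nil b u)]

end ContinuedFraction

theorem cf_insert_neutral_general {K : Type*} [AddCommMonoid K] (s : K → K)
    (hinv : ∀ a : K, s (s a) = a)
    (habs : ∀ a : K, s 0 + a = s 0) :
    (∀ (l₁ l₂ : List K), l₁ ≠ [] → cf s (l₁ ++ s 0 :: l₂) = cf s l₁) ∧
    (∀ (l₁ l₂ : List K) (x y : K),
      cf s (l₁ ++ x :: (0 : K) :: y :: l₂) = cf s (l₁ ++ (x + y) :: l₂)) := by
  refine ⟨fun l₁ l₂ hl₁ => ?_, fun l₁ l₂ x y => ?_⟩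
  · obtain ⟨a, t, rfl⟩ := List.exists_cons_of_ne_nil hl₁
    exact cf_cons_append_sZero hinv habs a t l₂
  · exact cf_append_congr l₁ (List.cons_ne_nil _ _) (List.cons_ne_nil _ _)
      (cf_cons_zero_cons hinv x y l₂)

/-- Inserting `e* = s 0` truncates a continued fraction:
`[x₁,…,x_m, e*, x_{m+1},…,xₙ] = [x₁,…,x_m]` for `m ≥ 1`; and inserting the neutral element
`e = 0` merges adjacent terms:
`[x₁,…,x_m, e, x_{m+1},…,xₙ] = [x₁,…,x_m + x_{m+1},…,xₙ]` for `0 < m < n`. -/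
theorem cf_insert_neutral {K : Type*} [AddCommMonoid K] [PartialOrder K] (s : K → K)
    (hbot : ∀ x : K, 0 ≤ x)
    (hadd : ∀ a b c : K, a ≤ b → a + c ≤ b + c)
    (hanti : ∀ a b : K, a ≤ b → s b ≤ s a)
    (hinv : ∀ a : K, s (s a) = a)
    (habs : ∀ a : K, s 0 + a = s 0) :
    (∀ (l₁ l₂ : List K), l₁ ≠ [] → cf s (l₁ ++ s 0 :: l₂) = cf s l₁) ∧
    (∀ (l₁ l₂ : List K) (x y : K),
      cf s (l₁ ++ x :: (0 : K) :: y :: l₂) = cf s (l₁ ++ (x + y) :: l₂)) :=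
  cf_insert_neutral_general s hinv habs
end
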